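/- arXiv:0808.0235 — 4 statements merged into one kernel-verified Lean document; each statement's English description precedes it below -/
import Mathlib

section
/- Let n_1 ≤ n_2 be positive integers and N a positive integer. Suppose nonnegative integers m_1, m_2 satisfy n_1 m_1 + n_2 m_2 ≤ ⌊(n_1+n_2)/2⌋·N, 2 m_1 ≤ N, and 2 m_2 ≤ N. Then (m_1 + m_2)/N ≤ 1 if n_1 + n_2 is even, and (m_1 + m_2)/N ≤ (2 n_2 − 1)/(2 n_2) if n_1 + n_2 is odd. -/
/-!
Both bounds are linear-programming duality. For even `n₁ + n₂` the two half-duplex constraints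
`2 mᵢ ≤ N` alone give `m₁ + m₂ ≤ N`. For `n₁ + n₂ = 2k + 1`, adding `(n₂ - n₁)/2` times the
constraint `2 m₁ ≤ N` to the cut constraint `n₁ m₁ + n₂ m₂ ≤ k N` gives
`n₂ (m₁ + m₂) ≤ (k + (n₂ - n₁)/2) N = (n₂ - 1/2) N`.
-/

theorem two_mul_mul_add_add_le_of_odd {n1 n2 k N m1 m2 : ℕ} (hk : n1 + n2 = 2 * k + 1)
    (h12 : n1 ≤ n2) (hc1 : n1 * m1 + n2 * m2 ≤ k * N) (hc2 : 2 * m1 ≤ N) :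
    2 * n2 * (m1 + m2) + N ≤ 2 * n2 * N := by
  obtain ⟨d, rfl⟩ := Nat.exists_eq_add_of_le h12
  calc 2 * (n1 + d) * (m1 + m2) + N
      = 2 * (n1 * m1 + (n1 + d) * m2) + d * (2 * m1) + N := by ring
    _ ≤ 2 * (k * N) + d * N + N := by gcongr
    _ = (n1 + (n1 + d) + d) * N := by rw [hk]; ring
    _ = 2 * (n1 + d) * N := by ring

theorem stmt_2_general (n1 n2 N m1 m2 : ℕ) (h2 : 0 < n2) (h12 : n1 ≤ n2)
    (hc1 : n1 * m1 + n2 * m2 ≤ ((n1 + n2) / 2) * N)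
    (hc2 : 2 * m1 ≤ N) (hc3 : 2 * m2 ≤ N) :
    (Even (n1 + n2) → ((m1 : ℝ) + m2) / N ≤ 1) ∧
    (Odd (n1 + n2) → ((m1 : ℝ) + m2) / N ≤ (2 * (n2 : ℝ) - 1) / (2 * n2)) := by
  refine ⟨fun _ => div_le_one_of_le₀ (by exact_mod_cast (by omega : m1 + m2 ≤ N)) N.cast_nonneg,
    fun ⟨k, hk⟩ => ?_⟩
  have hcut : n1 * m1 + n2 * m2 ≤ k * N := by rwa [show (n1 + n2) / 2 = k by omega] at hc1
  have hbound : (2 * n2 * (m1 + m2) + N : ℝ) ≤ 2 * n2 * N := by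
    exact_mod_cast two_mul_mul_add_add_le_of_odd hk h12 hcut hc2
  have hn2 : (1 : ℝ) ≤ n2 := by exact_mod_cast h2
  refine div_le_of_le_mul₀ N.cast_nonneg (div_nonneg (by linarith) (by linarith)) ?_
  rw [div_mul_eq_mul_div, le_div_iff₀ (by linarith)]
  linarith

/-- LP upper bound on the rate (m₁+m₂)/N of an orthogonal protocol for a
2-parallel-path network with path lengths n₁ ≤ n₂. -/
theorem stmt_2 (n1 n2 N m1 m2 : ℕ) (h1 : 0 < n1) (h2 : 0 < n2) (h12 : n1 ≤ n2)
    (hN : 0 < N)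
    (hc1 : n1 * m1 + n2 * m2 ≤ ((n1 + n2) / 2) * N)
    (hc2 : 2 * m1 ≤ N) (hc3 : 2 * m2 ≤ N) :
    (Even (n1 + n2) → ((m1 : ℝ) + m2) / N ≤ 1) ∧
    (Odd (n1 + n2) → ((m1 : ℝ) + m2) / N ≤ (2 * (n2 : ℝ) - 1) / (2 * n2)) :=
  stmt_2_general n1 n2 N m1 m2 h2 h12 hc1 hc2 hc3
end

section
/- For every odd cycle of length n = n_1 + n_2 (n_1 ≤ n_2), there exists an assignment of subsets D_j ⊆ {c_1,...,c_{2n_2}} to the edges of the cycle such that cyclically adjacent edges get disjoint subsets, edges on the shorter path receive exactly n_2 colors each, and edges on the longer path receive exactly n_2 − 1 colors each; hence the protocol achieves rate (2n_2 − 1)/(2n_2). -/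
/-!
Give every edge a block of consecutive colors modulo `2n₂`, the blocks laid end to end around
the palette in the order of the edges: `n₂` colors for each of the `n₁` edges of the short path,
then `n₂ - 1` for each edge of the long path. Consecutive blocks are disjoint because two of them
never use more than `2n₂` colors, and the last block meets the first one without overlap because
the blocks use `n₂ (n₁ + n₂ - 1)` colors in total, a multiple of `2n₂` since `n₁ + n₂` is odd.
-/

open Finset Fin.NatCast

namespace CyclicPalette

variable {N : ℕ} [NeZero N]

def window (N t s : ℕ) [NeZero N] : Finset (Fin N) :=
  (range s).image fun i => ((t + i : ℕ) : Fin N)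

lemma natCast_add_injOn (t : ℕ) :
    Set.InjOn (fun i : ℕ => ((t + i : ℕ) : Fin N)) (Set.Iio N) := by
  intro i hi i' hi' h
  have hmod : t + i ≡ t + i' [MOD N] := by simpa only [Fin.ext_iff, Fin.val_natCast, Nat.ModEq] using h
  exact (hmod.add_left_cancel' t).eq_of_lt_of_lt hi hi'

lemma card_window {t s : ℕ} (hs : s ≤ N) : (window N t s).card = s := by
  rw [window, card_image_of_injOn, card_range]
  exact (natCast_add_injOn t).mono fun i hi => (mem_range.mp hi).trans_le hs

lemma window_congr {t t' : ℕ} (s : ℕ) (h : t ≡ t' [MOD N]) : window N t s = window N t' s :=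
  image_congr fun i _ => Fin.ext (by simp only [Fin.val_natCast]; exact Nat.ModEq.add_right i h)

lemma disjoint_window_add {t s s' : ℕ} (h : s + s' ≤ N) :
    Disjoint (window N t s) (window N (t + s) s') := by
  simp only [window, disjoint_left, mem_image, mem_range, not_exists, not_and]
  rintro _ ⟨i, hi, rfl⟩ i' hi' heq
  rw [add_assoc] at heq
  have := natCast_add_injOn t (show s + i' < N by omega) (show i < N by omega) heq
  omega

def packing (N : ℕ) [NeZero N] (size : ℕ → ℕ) (j : ℕ) : Finset (Fin N) :=
  window N (∑ i ∈ range j, size i) (size j)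

lemma card_packing {size : ℕ → ℕ} {j : ℕ} (h : size j ≤ N) : (packing N size j).card = size j :=
  card_window h

lemma disjoint_packing_succ {size : ℕ → ℕ} {j : ℕ} (h : size j + size (j + 1) ≤ N) :
    Disjoint (packing N size j) (packing N size (j + 1)) := by
  rw [packing, packing, sum_range_succ]
  exact disjoint_window_add h

/-- Since the first `L` blocks fill the palette a whole number of times, block `L` would start
where block `0` does. -/
lemma disjoint_packing_cyclic {size : ℕ → ℕ} {L : ℕ} (hsum : N ∣ ∑ i ∈ range L, size i)
    (hadj : ∀ j < L, size j + size ((j + 1) % L) ≤ N) {j : ℕ} (hj : j < L) :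
    Disjoint (packing N size j) (packing N size ((j + 1) % L)) := by
  have hadj := hadj j hj
  rcases (Nat.succ_le_of_lt hj).lt_or_eq with hlt | rfl
  · rw [Nat.mod_eq_of_lt hlt] at hadj ⊢
    exact disjoint_packing_succ hadj
  · rw [Nat.mod_self] at hadj ⊢
    have hstart : window N (∑ i ∈ range 0, size i) (size 0) =
        window N (∑ i ∈ range (j + 1), size i) (size 0) :=
      window_congr _ (by rw [sum_range_zero]; exact (Nat.modEq_zero_iff_dvd.mpr hsum).symm)
    rw [packing, packing, hstart, sum_range_succ]
    exact disjoint_window_add hadj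

end CyclicPalette

open CyclicPalette in
/-- For an odd cycle of length n₁ + n₂ (n₁ ≤ n₂) there is an assignment of
color subsets from a palette of 2n₂ colors with cyclically adjacent edges
disjoint, edges of the shorter path getting n₂ colors and edges of the longer
path getting n₂ - 1 colors; the rate equals (2n₂-1)/(2n₂). -/
theorem stmt_4 (n1 n2 : ℕ) (h1 : 0 < n1) (h12 : n1 ≤ n2) (hodd : Odd (n1 + n2)) :
    ∃ D : ℕ → Finset (Fin (2 * n2)),
      (∀ j < n1 + n2, Disjoint (D j) (D ((j + 1) % (n1 + n2)))) ∧
      (∀ j < n1, (D j).card = n2) ∧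
      (∀ j, n1 ≤ j → j < n1 + n2 → (D j).card = n2 - 1) ∧
      ((n2 : ℝ) + ((n2 : ℝ) - 1)) / (2 * n2) = (2 * (n2 : ℝ) - 1) / (2 * n2) := by
  have : NeZero (2 * n2) := ⟨by omega⟩
  let size : ℕ → ℕ := fun j => if j < n1 then n2 else n2 - 1
  have size_le (j : ℕ) : size j ≤ n2 := by dsimp only [size]; split_ifs <;> omega
  have total : ∑ i ∈ range (n1 + n2), size i = n2 * (n1 + (n2 - 1)) := by
    rw [sum_range_add, sum_congr rfl fun i hi => if_pos (mem_range.mp hi),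
      sum_congr rfl fun i _ => if_neg (by omega : ¬n1 + i < n1)]
    simp only [sum_const, card_range, smul_eq_mul]
    ring
  have total_dvd : 2 * n2 ∣ ∑ i ∈ range (n1 + n2), size i := by
    obtain ⟨k, hk⟩ := hodd
    exact total ▸ ⟨k, by rw [show n1 + (n2 - 1) = 2 * k by omega]; ring⟩
  refine ⟨packing (2 * n2) size, fun j hj => disjoint_packing_cyclic total_dvd ?_ hj,
    fun j hj => ?_, fun j hj _ => ?_, by ring⟩
  · exact fun j _ => by linarith [size_le j, size_le ((j + 1) % (n1 + n2))]
  · rw [card_packing (by linarith [size_le j])]; exact if_pos hj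
  · rw [card_packing (by linarith [size_le j])]; exact if_neg (by omega)
end

section
/- Let N, L be positive integers, N_1 ≥ N_2 ≥ ... ≥ N_{L+1} > 0 with M_k positive integers and N = N_k·M_k for each k. For 0 ≤ r ≤ N, the infimum of Σ_{k=1}^{L+1} Σ_{j=1}^{M_k} α_{kj} over nonnegative reals α_{kj} subject to Σ_{i=1}^N (1 − Σ_{k=1}^{L+1} α_{k, e(i,k)})^+ ≤ r equals (N − r)/N_1, where e(i,k) ∈ [M_k] is a map such that each value j ∈ [M_k] is attained by exactly N_k indices i. Here x^+ = max(x, 0). -/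
/-!
Every path must collect gain at least `1 - (its outage)`, so the total gain over all `N` paths is at
least `N - r`. Counting that total by coefficient instead of by path, each `α_{kj}` is collected by
exactly `N_k ≤ N_1` paths, whence `N - r ≤ N_1 ∑ α`. Spreading `N - r` evenly over the `M_1`
coefficients of the first group gives every path the same outage `r / N` and attains the bound.
-/

open Finset

theorem sum_comp_eq_nsmul_of_card_fiber {β γ R : Type*} [Fintype β] [Fintype γ] [DecidableEq γ]
    [AddCommMonoid R] (g : β → γ) (n : ℕ) (hg : ∀ c, #{b | g b = c} = n) (f : γ → R) :
    ∑ b, f (g b) = n • ∑ c, f c := by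
  rw [← sum_fiberwise univ g (fun b => f (g b)), smul_sum]
  refine sum_congr rfl fun c _ => ?_
  rw [sum_congr rfl fun b hb => by rw [(mem_filter.mp hb).2], sum_const, hg]

theorem card_sub_sum_le_sum_max_one_sub {ι : Type*} [Fintype ι] (x : ι → ℝ) :
    (Fintype.card ι : ℝ) - ∑ i, x i ≤ ∑ i, max (1 - x i) 0 := by
  calc (Fintype.card ι : ℝ) - ∑ i, x i = ∑ i, (1 - x i) := by simp [sum_sub_distrib]
    _ ≤ ∑ i, max (1 - x i) 0 := sum_le_sum fun i _ => le_max_left _ _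

section Balanced

variable {ι κ : Type*} [Fintype ι] [Fintype κ] {M : κ → Type*} [∀ k, Fintype (M k)]
  [∀ k, DecidableEq (M k)] {e : ι → ∀ k, M k} {n : κ → ℕ}

theorem sum_sum_comp_eq_of_balanced (hbal : ∀ k j, #{i | e i k = j} = n k) (α : ∀ k, M k → ℝ) :
    ∑ i, ∑ k, α k (e i k) = ∑ k, (n k : ℝ) * ∑ j, α k j := by
  rw [sum_comm]
  refine sum_congr rfl fun k _ => ?_
  rw [sum_comp_eq_nsmul_of_card_fiber (e · k) (n k) (hbal k), nsmul_eq_mul]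

theorem card_sub_le_mul_sum_of_outage_le (hbal : ∀ k j, #{i | e i k = j} = n k) {n₀ : ℕ}
    (hn : ∀ k, n k ≤ n₀) {α : ∀ k, M k → ℝ} (hα : ∀ k j, 0 ≤ α k j) {r : ℝ}
    (hr : ∑ i, max (1 - ∑ k, α k (e i k)) 0 ≤ r) :
    (Fintype.card ι : ℝ) - r ≤ n₀ * ∑ k, ∑ j, α k j := by
  have hgain : (Fintype.card ι : ℝ) - r ≤ ∑ i, ∑ k, α k (e i k) := by
    linarith [card_sub_sum_le_sum_max_one_sub fun i => ∑ k, α k (e i k)]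
  rw [sum_sum_comp_eq_of_balanced hbal] at hgain
  rw [mul_sum]
  refine hgain.trans (sum_le_sum fun k _ => ?_)
  exact mul_le_mul_of_nonneg_right (by exact_mod_cast hn k) (sum_nonneg fun j _ => hα k j)

end Balanced

theorem stmt_7_general (L N : ℕ) (hN : 0 < N) (Nk Mk : Fin (L + 1) → ℕ)
    (hNkpos : ∀ k, 0 < Nk k)
    (hmono : ∀ j k : Fin (L + 1), j ≤ k → Nk k ≤ Nk j)
    (hprod : ∀ k, N = Nk k * Mk k)
    (e : Fin N → ∀ k : Fin (L + 1), Fin (Mk k))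
    (hbalanced : ∀ (k : Fin (L + 1)) (j : Fin (Mk k)),
      (Finset.univ.filter (fun i => e i k = j)).card = Nk k)
    (r : ℝ) (hr0 : 0 ≤ r) (hrN : r ≤ N) :
    IsLeast {s : ℝ | ∃ α : ∀ k : Fin (L + 1), Fin (Mk k) → ℝ,
        (∀ k j, 0 ≤ α k j) ∧
        (∑ i, max (1 - ∑ k, α k (e i k)) 0 ≤ r) ∧
        s = ∑ k, ∑ j, α k j}
      (((N : ℝ) - r) / (Nk 0 : ℝ)) := by
  have hNpos : (0 : ℝ) < N := by exact_mod_cast hN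
  have hNk0 : (0 : ℝ) < Nk 0 := by exact_mod_cast hNkpos 0
  refine ⟨⟨fun k _ => if k = 0 then (N - r) / N else 0, ?_, ?_, ?_⟩, ?_⟩
  · intro k j
    dsimp only
    split_ifs
    exacts [div_nonneg (sub_nonneg.2 hrN) hNpos.le, le_rfl]
  · have hslack : 1 - ((N : ℝ) - r) / N = r / N := by field_simp; ring
    simp [hslack, max_eq_left (div_nonneg hr0 hNpos.le), mul_div_cancel₀ r hNpos.ne']
  · have hN0 : (N : ℝ) = Nk 0 * Mk 0 := by exact_mod_cast hprod 0
    rw [Fintype.sum_eq_single 0 fun k hk => by simp [hk]]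
    simp only [if_true, sum_const, card_univ, Fintype.card_fin, nsmul_eq_mul]
    field_simp
    rw [hN0]
    ring
  · rintro s ⟨α, hα, hfeas, rfl⟩
    rw [div_le_iff₀ hNk0, mul_comm]
    simpa using card_sub_le_mul_sum_of_outage_le hbalanced
      (fun k => hmono 0 k (Fin.zero_le k)) hα hfeas

/-- Exact outage-exponent optimization for a balanced parallel product channel:
the minimum of Σ_{k,j} α_{kj} over nonnegative α subject to
Σ_i (1 - Σ_k α_{k, e(i,k)})⁺ ≤ r equals (N - r)/N_1. -/
theorem stmt_7 (L N : ℕ) (hN : 0 < N) (Nk Mk : Fin (L + 1) → ℕ)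
    (hNkpos : ∀ k, 0 < Nk k) (hMkpos : ∀ k, 0 < Mk k)
    (hmono : ∀ j k : Fin (L + 1), j ≤ k → Nk k ≤ Nk j)
    (hprod : ∀ k, N = Nk k * Mk k)
    (e : Fin N → ∀ k : Fin (L + 1), Fin (Mk k))
    (hbalanced : ∀ (k : Fin (L + 1)) (j : Fin (Mk k)),
      (Finset.univ.filter (fun i => e i k = j)).card = Nk k)
    (r : ℝ) (hr0 : 0 ≤ r) (hrN : r ≤ N) :
    IsLeast {s : ℝ | ∃ α : ∀ k : Fin (L + 1), Fin (Mk k) → ℝ,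
        (∀ k j, 0 ≤ α k j) ∧
        (∑ i, max (1 - ∑ k, α k (e i k)) 0 ≤ r) ∧
        s = ∑ k, ∑ j, α k j}
      (((N : ℝ) - r) / (Nk 0 : ℝ)) :=
  stmt_7_general L N hN Nk Mk hNkpos hmono hprod e hbalanced r hr0 hrN
end

section
/- For K ≥ 4, define an edge coloring of the KPP network with colors c_0,...,c_{K−1} (indices mod K) by assigning to edge e_{ij} (the j-th edge on path i, 1 ≤ j ≤ n_i) the color: G_i cycles through (c_i, c_{i+1}, c_{i+2}) for j ≢ 0 positions (i.e., A_{ij} = c_{i + ((j−1) mod 3)} for j < n_i) and A_{i n_i} = c_{i+3}. Then this coloring satisfies: (1) the colors of first edges A_{i1} are pairwise distinct across paths; (2) the colors of last edges A_{i n_i} are pairwise distinct; (3) adjacent edges on a path receive distinct colors; (4) moreover edges at distance two on a path receive distinct colors (no back-flow). -/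
/-!
Every edge of path `i` gets the colour `i + d` for an offset `d ∈ {0, 1, 2, 3}`: the offsets run
through `0, 1, 2, 0, 1, 2, …` and the last edge gets `3`. As `K ≥ 4`, distinct offsets are distinct
residues, so edges of one path clash only if their offsets agree, which never happens at distance
one or two. First edges (offset `0`, because `n i ≥ 2`) and last edges (offset `3`) of different
paths differ because distinct path indices are distinct residues.
-/

theorem ZMod.eq_of_natCast_eq_of_lt {K a b : ℕ} (ha : a < K) (hb : b < K)
    (h : (a : ZMod K) = b) : a = b :=
  ((ZMod.natCast_eq_natCast_iff a b K).mp h).eq_of_lt_of_lt ha hb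

theorem ZMod.eq_of_add_natCast_eq {K a b : ℕ} {x : ZMod K} (ha : a < K) (hb : b < K)
    (h : x + a = x + b) : a = b :=
  ZMod.eq_of_natCast_eq_of_lt ha hb (add_left_cancel h)

theorem Fin.eq_of_natCast_add_eq {K : ℕ} {i i' : Fin K} {c : ZMod K}
    (h : ((i : ℕ) : ZMod K) + c = ((i' : ℕ) : ZMod K) + c) : i = i' :=
  Fin.ext (ZMod.eq_of_natCast_eq_of_lt i.isLt i'.isLt (add_right_cancel h))

/-- The colour of the `j`-th edge of a path with `m` edges is the path index plus this offset. -/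
def kppOffset (m j : ℕ) : ℕ := if j < m then (j - 1) % 3 else 3

namespace kppOffset

variable {m j : ℕ}

theorem lt_four : kppOffset m j < 4 := by
  unfold kppOffset; split_ifs <;> omega

theorem one_eq_zero (hm : 2 ≤ m) : kppOffset m 1 = 0 := by
  unfold kppOffset; split_ifs <;> omega

theorem self_eq_three : kppOffset m m = 3 := by
  simp [kppOffset]

theorem ne_succ (hj : 1 ≤ j) (hjm : j < m) : kppOffset m j ≠ kppOffset m (j + 1) := by
  unfold kppOffset; split_ifs <;> omega

theorem ne_add_two (hj : 1 ≤ j) (hjm : j + 2 ≤ m) : kppOffset m j ≠ kppOffset m (j + 2) := by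
  unfold kppOffset; split_ifs <;> omega

end kppOffset

/-- The explicit coloring A_{ij} = c_{i+(j-1) mod 3} for j < n_i and
A_{i n_i} = c_{i+3} of a KPP network with K ≥ 4 paths satisfies: distinct first
edges, distinct last edges, adjacent edges distinct (half-duplex), and edges at
distance two distinct (no back-flow). -/
theorem stmt_12 (K : ℕ) (hK : 4 ≤ K) (n : Fin K → ℕ) (hn : ∀ i, 2 ≤ n i) :
    let A : Fin K → ℕ → ZMod K := fun i j =>
      if j < n i then ((i : ℕ) : ZMod K) + (((j - 1) % 3 : ℕ) : ZMod K)
      else ((i : ℕ) : ZMod K) + 3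
    (∀ i i' : Fin K, i ≠ i' → A i 1 ≠ A i' 1) ∧
    (∀ i i' : Fin K, i ≠ i' → A i (n i) ≠ A i' (n i')) ∧
    (∀ i : Fin K, ∀ j, 1 ≤ j → j < n i → A i j ≠ A i (j + 1)) ∧
    (∀ i : Fin K, ∀ j, 1 ≤ j → j + 2 ≤ n i → A i j ≠ A i (j + 2)) := by
  intro A
  have hA (i : Fin K) (j : ℕ) : A i j = ((i : ℕ) : ZMod K) + (kppOffset (n i) j : ℕ) := by
    simp only [A, kppOffset]
    split_ifs <;> push_cast <;> rfl
  have offset_inj {i : Fin K} {j j' : ℕ} (h : A i j = A i j') :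
      kppOffset (n i) j = kppOffset (n i) j' := by
    rw [hA, hA] at h
    exact ZMod.eq_of_add_natCast_eq (kppOffset.lt_four.trans_le hK)
      (kppOffset.lt_four.trans_le hK) h
  refine ⟨fun i i' hne h => hne ?_, fun i i' hne h => hne ?_,
    fun i j hj hjn h => kppOffset.ne_succ hj hjn (offset_inj h),
    fun i j hj hjn h => kppOffset.ne_add_two hj hjn (offset_inj h)⟩
  · rw [hA, hA, kppOffset.one_eq_zero (hn i), kppOffset.one_eq_zero (hn i')] at h
    exact Fin.eq_of_natCast_add_eq h
  · rw [hA, hA, kppOffset.self_eq_three, kppOffset.self_eq_three] at h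
    exact Fin.eq_of_natCast_add_eq h
end
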